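/- Let f be Lebesgue integrable over [c,d] and u : [a,b] → [c,d] be monotone and absolutely continuous. Then (f ∘ u) · u' is Lebesgue integrable over [a,b] and ∫_{u(α)}^{u(β)} f(x) dx = ∫_α^β f(u(t)) u'(t) dt for all α, β ∈ [a,b]. -/

import Mathlib

open MeasureTheory Set intervalIntegral

/-- `f` is absolutely continuous on `[a,b]` (standard ε–δ definition). -/
def AbsolutelyContinuousOn (f : ℝ → ℝ) (a b : ℝ) : Prop :=
  ∀ ε > (0:ℝ), ∃ δ > (0:ℝ), ∀ n : ℕ, ∀ x y : Fin n → ℝ,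
    (∀ i, a ≤ x i ∧ x i ≤ y i ∧ y i ≤ b) →
    (∀ i j, i ≠ j → Disjoint (Ioo (x i) (y i)) (Ioo (x j) (y j))) →
    ∑ i, (y i - x i) < δ → ∑ i, |f (y i) - f (x i)| < ε

open scoped ENNReal

/-!
The measure `u' dt` on `[α, β]` gives `[α, q]` the mass `u q - u α` (fundamental theorem of
calculus for absolutely continuous functions), and a sublevel set of the monotone continuous `u`
on `[α, β]` is an interval `[α, q]` with `u q` the level. Hence `u` pushes `u' dt` forward to
Lebesgue measure on `[u α, u β]`, and the formula is the change of variables for a push-forward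
measure. The antitone case follows by applying the monotone one to `-u`.
-/

lemma dist_comp_eq_abs_sub_max_min (u : ℝ → ℝ) (p q : ℝ) :
    dist (u p) (u q) = |u (max p q) - u (min p q)| := by
  rcases le_total p q with h | h
  · rw [max_eq_right h, min_eq_left h, Real.dist_eq, abs_sub_comm]
  · rw [max_eq_left h, min_eq_right h, Real.dist_eq]

theorem AbsolutelyContinuousOn.absolutelyContinuousOnInterval {u : ℝ → ℝ} {a b : ℝ}
    (hab : a ≤ b) (hu : AbsolutelyContinuousOn u a b) : AbsolutelyContinuousOnInterval u a b := by
  rw [absolutelyContinuousOnInterval_iff]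
  intro ε hε
  obtain ⟨δ, hδ, h⟩ := hu ε hε
  refine ⟨δ, hδ, fun ⟨n, I⟩ ⟨hmem, hdisj⟩ hlen => ?_⟩
  simp only [Finset.mem_range, uIcc_of_le hab] at hmem hdisj hlen ⊢
  rw [Finset.sum_range] at hlen ⊢
  simp only [dist_comp_eq_abs_sub_max_min u]
  refine h n (fun i => min (I i).1 (I i).2) (fun i => max (I i).1 (I i).2)
    (fun i => ⟨le_min (hmem i i.2).1.1 (hmem i i.2).2.1, min_le_max,
      max_le (hmem i i.2).1.2 (hmem i i.2).2.2⟩)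
    (fun i j hij => (hdisj (by simp) (by simp) (Fin.val_ne_of_ne hij)).mono
      Ioo_subset_Ioc_self Ioo_subset_Ioc_self)
    ?_
  simpa [Real.dist_eq, max_sub_min_eq_abs'] using hlen

section Pushforward

variable {u : ℝ → ℝ} {α β : ℝ}

theorem MonotoneOn.exists_preimage_Iic_inter_Icc_eq (hαβ : α ≤ β)
    (hmono : MonotoneOn u (Icc α β)) (hcont : ContinuousOn u (Icc α β)) {t : ℝ}
    (ht : t ∈ Icc (u α) (u β)) :
    ∃ q ∈ Icc α β, u q = t ∧ Icc α β ∩ u ⁻¹' Iic t = Icc α q := by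
  set S := Icc α β ∩ u ⁻¹' Iic t
  have hαS : α ∈ S := ⟨left_mem_Icc.2 hαβ, ht.1⟩
  have hbdd : BddAbove S := bddAbove_Icc.mono inter_subset_left
  have hqS : sSup S ∈ S :=
    (hcont.preimage_isClosed_of_isClosed isClosed_Icc isClosed_Iic).csSup_mem ⟨α, hαS⟩ hbdd
  obtain ⟨p, hp, hpt⟩ := intermediate_value_Icc hαβ hcont ht
  have hpq : p ≤ sSup S := le_csSup hbdd ⟨hp, hpt.le⟩
  refine ⟨sSup S, hqS.1, le_antisymm hqS.2 (hpt ▸ hmono hp hqS.1 hpq), ?_⟩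
  refine Subset.antisymm (fun x hx => ⟨hx.1.1, le_csSup hbdd hx⟩) fun x hx => ?_
  have hx' : x ∈ Icc α β := ⟨hx.1, hx.2.trans hqS.1.2⟩
  exact ⟨hx', (hmono hx' hqS.1 hx.2).trans hqS.2⟩

theorem MonotoneOn.map_restrict_Icc_eq_volume {μ : Measure ℝ} (hαβ : α ≤ β)
    (hmono : MonotoneOn u (Icc α β)) (hcont : ContinuousOn u (Icc α β))
    (hμ : ∀ q ∈ Icc α β, μ (Icc α q) = ENNReal.ofReal (u q - u α)) :
    (μ.restrict (Icc α β)).map u = volume.restrict (Icc (u α) (u β)) := by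
  have : IsFiniteMeasure (μ.restrict (Icc α β)) :=
    isFiniteMeasure_restrict.2 (by simp [hμ β ⟨hαβ, le_rfl⟩])
  refine Measure.ext_of_Iic _ _ fun t => ?_
  rw [Measure.map_apply_of_aemeasurable (hcont.aemeasurable measurableSet_Icc) measurableSet_Iic,
    Measure.restrict_apply' measurableSet_Icc, Measure.restrict_apply measurableSet_Iic,
    inter_comm]
  have hbound : ∀ x ∈ Icc α β, u x ∈ Icc (u α) (u β) := fun x hx =>
    ⟨hmono ⟨le_rfl, hαβ⟩ hx hx.1, hmono hx ⟨hαβ, le_rfl⟩ hx.2⟩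
  rcases lt_or_ge t (u α) with htα | hαt
  · have h1 : Icc α β ∩ u ⁻¹' Iic t = ∅ :=
      eq_empty_of_forall_notMem fun x hx => ((hbound x hx.1).1.trans hx.2).not_gt htα
    have h2 : Iic t ∩ Icc (u α) (u β) = ∅ :=
      eq_empty_of_forall_notMem fun x hx => (hx.2.1.trans hx.1).not_gt htα
    rw [h1, h2, measure_empty, measure_empty]
  rcases le_or_gt (u β) t with hβt | htβ
  · have h1 : Icc α β ∩ u ⁻¹' Iic t = Icc α β :=
      inter_eq_left.2 fun x hx => (hbound x hx).2.trans hβt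
    have h2 : Iic t ∩ Icc (u α) (u β) = Icc (u α) (u β) :=
      inter_eq_right.2 fun x hx => hx.2.trans hβt
    rw [h1, h2, hμ β ⟨hαβ, le_rfl⟩, Real.volume_Icc]
  obtain ⟨q, hq, hqt, hS⟩ := hmono.exists_preimage_Iic_inter_Icc_eq hαβ hcont ⟨hαt, htβ.le⟩
  have h2 : Iic t ∩ Icc (u α) (u β) = Icc (u α) t :=
    ext fun x => ⟨fun hx => ⟨hx.2.1, hx.1⟩, fun hx => ⟨hx.2, hx.1, hx.2.trans htβ.le⟩⟩
  rw [hS, h2, hμ q hq, hqt, Real.volume_Icc]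

variable {g : ℝ → ℝ}

theorem map_withDensity_eq_volume_restrict (hαβ : α ≤ β)
    (hmono : MonotoneOn u (Icc α β)) (hcont : ContinuousOn u (Icc α β))
    (hg : IntegrableOn g (Icc α β)) (hg0 : 0 ≤ᵐ[volume.restrict (Icc α β)] g)
    (hgu : ∀ q ∈ Icc α β, ∫ t in α..q, g t = u q - u α) :
    ((volume.restrict (Icc α β)).withDensity fun t => ENNReal.ofReal (g t)).map u =
      volume.restrict (Icc (u α) (u β)) := by
  rw [← restrict_withDensity measurableSet_Icc]
  refine hmono.map_restrict_Icc_eq_volume hαβ hcont fun q hq => ?_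
  have hsub : Icc α q ⊆ Icc α β := Icc_subset_Icc_right hq.2
  rw [withDensity_apply _ measurableSet_Icc, ← ofReal_integral_eq_lintegral_ofReal
    (hg.mono_set hsub) (ae_restrict_of_ae_restrict_of_subset hsub hg0),
    integral_Icc_eq_integral_Ioc, ← integral_of_le hq.1, hgu q hq]

theorem integrableOn_comp_mul_and_integral_Icc_eq {f : ℝ → ℝ} (hαβ : α ≤ β)
    (hmono : MonotoneOn u (Icc α β)) (hcont : ContinuousOn u (Icc α β))
    (hg : IntegrableOn g (Icc α β)) (hg0 : 0 ≤ᵐ[volume.restrict (Icc α β)] g)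
    (hgu : ∀ q ∈ Icc α β, ∫ t in α..q, g t = u q - u α)
    (hf : IntegrableOn f (Icc (u α) (u β))) :
    IntegrableOn (fun t => f (u t) * g t) (Icc α β) ∧
      ∫ x in Icc (u α) (u β), f x = ∫ t in Icc α β, f (u t) * g t := by
  set ν := (volume.restrict (Icc α β)).withDensity fun t => ((g t).toNNReal : ℝ≥0∞)
  have hmap : ν.map u = volume.restrict (Icc (u α) (u β)) :=
    map_withDensity_eq_volume_restrict hαβ hmono hcont hg hg0 hgu
  have hu : AEMeasurable u ν :=
    (hcont.aemeasurable measurableSet_Icc).mono_ac (withDensity_absolutelyContinuous _ _)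
  have hf' : Integrable f (ν.map u) := hmap ▸ hf
  have hρ : AEMeasurable (fun t => (g t).toNNReal) (volume.restrict (Icc α β)) :=
    hg.aemeasurable.real_toNNReal
  have hsmul : (fun t => (g t).toNNReal • f (u t)) =ᵐ[volume.restrict (Icc α β)]
      fun t => f (u t) * g t := by
    filter_upwards [hg0] with t ht
    rw [NNReal.smul_def, Real.coe_toNNReal _ ht, smul_eq_mul, mul_comm]
  refine ⟨?_, ?_⟩
  · refine (integrable_congr hsmul).1 ((integrable_withDensity_iff_integrable_smul₀ hρ).1 ?_)
    exact (integrable_map_measure hf'.aestronglyMeasurable hu).1 hf'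
  · calc ∫ x in Icc (u α) (u β), f x = ∫ x, f x ∂ν.map u := by rw [hmap]
      _ = ∫ t, f (u t) ∂ν := integral_map hu hf'.aestronglyMeasurable
      _ = ∫ t in Icc α β, (g t).toNNReal • f (u t) := integral_withDensity_eq_integral_smul₀ hρ _
      _ = ∫ t in Icc α β, f (u t) * g t := integral_congr_ae hsmul

end Pushforward

theorem ae_restrict_Icc_mem_Ioo {a b : ℝ} : ∀ᵐ t ∂(volume.restrict (Icc a b)), t ∈ Ioo a b := by
  rw [← Measure.restrict_congr_set Ioo_ae_eq_Icc]
  exact ae_restrict_mem measurableSet_Ioo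

section Derivative

variable {u u' : ℝ → ℝ} {a b : ℝ}

theorem ae_hasDerivAt_of_hasDerivWithinAt_Icc
    (hu : ∀ᵐ t ∂(volume.restrict (Icc a b)), HasDerivWithinAt u (u' t) (Icc a b) t) :
    ∀ᵐ t ∂(volume.restrict (Icc a b)), HasDerivAt u (u' t) t := by
  filter_upwards [hu, ae_restrict_Icc_mem_Ioo] with t ht hIoo
  exact ht.hasDerivAt (Icc_mem_nhds hIoo.1 hIoo.2)

theorem MonotoneOn.ae_nonneg_of_hasDerivAt (hmono : MonotoneOn u (Icc a b))
    (hu : ∀ᵐ t ∂(volume.restrict (Icc a b)), HasDerivAt u (u' t) t) :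
    0 ≤ᵐ[volume.restrict (Icc a b)] u' := by
  filter_upwards [hu, ae_restrict_Icc_mem_Ioo] with t ht hIoo
  exact ht.hasDerivWithinAt.nonneg_of_monotoneOn
    (uniqueDiffOn_Icc (hIoo.1.trans hIoo.2) t (Ioo_subset_Icc_self hIoo)).accPt hmono

theorem deriv_ae_eq_of_ae_hasDerivAt {μ : Measure ℝ}
    (hu : ∀ᵐ t ∂μ, HasDerivAt u (u' t) t) : deriv u =ᵐ[μ] u' :=
  hu.mono fun _ ht => ht.deriv

namespace AbsolutelyContinuousOnInterval

theorem intervalIntegrable_of_ae_hasDerivAt (hAC : AbsolutelyContinuousOnInterval u a b)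
    (hu : ∀ᵐ t ∂(volume.restrict (uIoc a b)), HasDerivAt u (u' t) t) :
    IntervalIntegrable u' volume a b :=
  hAC.intervalIntegrable_deriv.congr_ae (deriv_ae_eq_of_ae_hasDerivAt hu)

theorem integral_eq_sub_of_ae_hasDerivAt (hAC : AbsolutelyContinuousOnInterval u a b)
    (hu : ∀ᵐ t ∂(volume.restrict (uIoc a b)), HasDerivAt u (u' t) t) :
    ∫ t in a..b, u' t = u b - u a := by
  rw [← hAC.integral_deriv_eq_sub, integral_congr_ae_restrict (deriv_ae_eq_of_ae_hasDerivAt hu)]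

end AbsolutelyContinuousOnInterval

theorem MonotoneOn.integrableOn_comp_mul_and_integral_eq {f : ℝ → ℝ} (hab : a ≤ b)
    (hmono : MonotoneOn u (Icc a b)) (hAC : AbsolutelyContinuousOnInterval u a b)
    (hu : ∀ᵐ t ∂(volume.restrict (Icc a b)), HasDerivAt u (u' t) t)
    (hf : IntegrableOn f (Icc (u a) (u b))) :
    IntegrableOn (fun t => f (u t) * u' t) (Icc a b) ∧
      ∫ x in u a..u b, f x = ∫ t in a..b, f (u t) * u' t := by
  have hu_uIoc : ∀ {q}, q ∈ Icc a b → ∀ᵐ t ∂(volume.restrict (uIoc a q)), HasDerivAt u (u' t) t :=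
    fun hq => ae_restrict_of_ae_restrict_of_subset
      (uIoc_subset_uIcc.trans (uIcc_subset_Icc (left_mem_Icc.2 hab) hq)) hu
  obtain ⟨hint, heq⟩ := integrableOn_comp_mul_and_integral_Icc_eq hab hmono
    (by simpa [uIcc_of_le hab] using hAC.continuousOn)
    ((intervalIntegrable_iff_integrableOn_Icc_of_le hab).1
      (hAC.intervalIntegrable_of_ae_hasDerivAt (hu_uIoc (right_mem_Icc.2 hab))))
    (hmono.ae_nonneg_of_hasDerivAt hu)
    (fun q hq => (hAC.mono (uIcc_of_le hab ▸ uIcc_subset_Icc (left_mem_Icc.2 hab) hq))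
      |>.integral_eq_sub_of_ae_hasDerivAt (hu_uIoc hq))
    hf
  refine ⟨hint, ?_⟩
  rw [integral_of_le (hmono (left_mem_Icc.2 hab) (right_mem_Icc.2 hab) hab), integral_of_le hab,
    ← integral_Icc_eq_integral_Ioc, ← integral_Icc_eq_integral_Ioc, heq]

end Derivative

theorem change_of_variable_of_monotoneOn (a b c d : ℝ) (f u u' : ℝ → ℝ)
    (hf : IntegrableOn f (Icc c d) volume)
    (hmaps : MapsTo u (Icc a b) (Icc c d))
    (hmono : MonotoneOn u (Icc a b))
    (hAC : AbsolutelyContinuousOn u a b)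
    (hu : ∀ᵐ t ∂(volume.restrict (Icc a b)), HasDerivWithinAt u (u' t) (Icc a b) t) :
    IntegrableOn (fun t => f (u t) * u' t) (Icc a b) volume ∧
      ∀ α ∈ Icc a b, ∀ β ∈ Icc a b,
        (∫ x in u α..u β, f x) = ∫ t in α..β, f (u t) * u' t := by
  rcases lt_or_ge b a with hba | hab
  · simp [Icc_eq_empty_of_lt hba]
  have hAC' := hAC.absolutelyContinuousOnInterval hab
  have hu' := ae_hasDerivAt_of_hasDerivWithinAt_Icc hu
  have hordered : ∀ α ∈ Icc a b, ∀ β ∈ Icc a b, α ≤ β →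
      IntegrableOn (fun t => f (u t) * u' t) (Icc α β) ∧
        (∫ x in u α..u β, f x) = ∫ t in α..β, f (u t) * u' t := fun α hα β hβ hαβ =>
    (hmono.mono (Icc_subset_Icc hα.1 hβ.2)).integrableOn_comp_mul_and_integral_eq hαβ
      (hAC'.mono (uIcc_of_le hab ▸ uIcc_subset_Icc hα hβ))
      (ae_restrict_of_ae_restrict_of_subset (Icc_subset_Icc hα.1 hβ.2) hu')
      (hf.mono_set (Icc_subset_Icc (hmaps hα).1 (hmaps hβ).2))
  refine ⟨(hordered a (left_mem_Icc.2 hab) b (right_mem_Icc.2 hab) hab).1, fun α hα β hβ => ?_⟩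
  rcases le_total α β with hαβ | hβα
  · exact (hordered α hα β hβ hαβ).2
  · rw [integral_symm, (hordered β hβ α hα hβα).2, ← integral_symm]

theorem AbsolutelyContinuousOn.neg {u : ℝ → ℝ} {a b : ℝ} (hu : AbsolutelyContinuousOn u a b) :
    AbsolutelyContinuousOn (fun t => -u t) a b := by
  intro ε hε
  obtain ⟨δ, hδ, h⟩ := hu ε hε
  refine ⟨δ, hδ, fun n x y hxy hdisj hlen => ?_⟩
  simpa only [neg_sub_neg, abs_sub_comm] using h n x y hxy hdisj hlen

theorem change_of_variable_of_antitoneOn (a b c d : ℝ) (f u u' : ℝ → ℝ)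
    (hf : IntegrableOn f (Icc c d) volume)
    (hmaps : MapsTo u (Icc a b) (Icc c d))
    (hanti : AntitoneOn u (Icc a b))
    (hAC : AbsolutelyContinuousOn u a b)
    (hu : ∀ᵐ t ∂(volume.restrict (Icc a b)), HasDerivWithinAt u (u' t) (Icc a b) t) :
    IntegrableOn (fun t => f (u t) * u' t) (Icc a b) volume ∧
      ∀ α ∈ Icc a b, ∀ β ∈ Icc a b,
        (∫ x in u α..u β, f x) = ∫ t in α..β, f (u t) * u' t := by
  obtain ⟨hint, heq⟩ := change_of_variable_of_monotoneOn a b (-d) (-c) (fun x => f (-x))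
    (fun t => -u t) (fun t => -u' t) (by simpa using hf.comp_neg)
    (fun t ht => ⟨neg_le_neg (hmaps ht).2, neg_le_neg (hmaps ht).1⟩) hanti.neg hAC.neg
    (hu.mono fun t ht => ht.neg)
  simp only [neg_neg, mul_neg] at hint heq
  refine ⟨by simpa using hint.neg, fun α hα β hβ => ?_⟩
  rw [← neg_inj, ← integral_symm, ← intervalIntegral.integral_neg, ← heq α hα β hβ,
    integral_comp_neg, neg_neg, neg_neg]

/-- Change of variable (alternate form I): if `f` is Lebesgue integrable over `[c,d]`
and `u : [a,b] → [c,d]` is monotone and absolutely continuous (with a.e. derivative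
`u'`), then `(f ∘ u)·u'` is Lebesgue integrable over `[a,b]` and
`∫_{u α}^{u β} f = ∫_α^β f(u t) u'(t) dt` for all `α, β ∈ [a,b]`. -/
theorem change_of_variable_monotone_ac (a b c d : ℝ) (f u u' : ℝ → ℝ)
    (hf : IntegrableOn f (Icc c d) volume)
    (hmaps : MapsTo u (Icc a b) (Icc c d))
    (hmono : MonotoneOn u (Icc a b) ∨ AntitoneOn u (Icc a b))
    (hAC : AbsolutelyContinuousOn u a b)
    (hu : ∀ᵐ t ∂(volume.restrict (Icc a b)), HasDerivWithinAt u (u' t) (Icc a b) t) :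
    IntegrableOn (fun t => f (u t) * u' t) (Icc a b) volume ∧
      ∀ α ∈ Icc a b, ∀ β ∈ Icc a b,
        (∫ x in u α..u β, f x) = ∫ t in α..β, f (u t) * u' t := by
  rcases hmono with hmono | hanti
  · exact change_of_variable_of_monotoneOn a b c d f u u' hf hmaps hmono hAC hu
  · exact change_of_variable_of_antitoneOn a b c d f u u' hf hmaps hanti hAC hu
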